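/- Let Y be a normal algebraic variety and let D, D' be two Q-divisors on Y. If D is semi-ample and for every positive integer r the space of global sections H^0(Y, O_Y(rD)) is contained in H^0(Y, O_Y(rD')), then D ≤ D' coefficient-wise. -/
import Mathlib


/-- Let `Y` be a normal variety, abstracted as follows: `ι` indexes the prime
divisors of `Y`, `K` is its function field, and `ord Z f` is the vanishing order of a rational
function `f` along the prime divisor `Z`.  A `ℚ`-divisor is a function `D : ι → ℚ` and
`H0 D = H⁰(Y, 𝒪_Y(D))` is the set of nonzero rational functions `f` with `div(f) + D ≥ 0`.
Semi-ampleness of `D` is recorded by its characteristic consequence for the covering by the open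
sets `Y_{rD,s}`: there is `r > 0` such that every prime divisor `Z` avoids the zero locus
`Z_{Y,rD}(s)` of some nonzero global section `s` of `rD`, i.e. `ord_Z(s) + r·D(Z) = 0`.
If moreover `H⁰(Y, 𝒪_Y(rD)) ⊆ H⁰(Y, 𝒪_Y(rD'))` for every `r > 0`, then `D ≤ D'`
coefficient-wise. -/
theorem qdivisor_le_of_semiample_of_sections_subset
    {ι K : Type*} [Field K]
    (ord : ι → K → ℤ)
    (H0 : (ι → ℚ) → Set K)
    (hH0 : ∀ D : ι → ℚ, H0 D = {f : K | f ≠ 0 ∧ ∀ Z, 0 ≤ (ord Z f : ℚ) + D Z})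
    (D D' : ι → ℚ)
    (hsemiample : ∃ r : ℕ, 0 < r ∧
      ∀ Z : ι, ∃ s ∈ H0 ((r : ℚ) • D), (ord Z s : ℚ) + (r : ℚ) * D Z = 0)
    (hsub : ∀ r : ℕ, 0 < r → H0 ((r : ℚ) • D) ⊆ H0 ((r : ℚ) • D')) :
    ∀ Z : ι, D Z ≤ D' Z := by
  intro Z
  obtain ⟨r, hr, hsa⟩ := hsemiample
  obtain ⟨s, hs, hZ⟩ := hsa Z
  have hs' := hsub r hr hs
  rw [hH0] at hs'
  have h2 := hs'.2 Z
  simp only [Pi.smul_apply, smul_eq_mul] at h2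
  have hrpos : (0:ℚ) < (r:ℚ) := by exact_mod_cast hr
  nlinarith [h2, hZ]
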